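/- arXiv:2605.05860 — 6 statements merged into one kernel-verified Lean document; each statement's English description precedes it below -/
import Mathlib

section
/- Let P = {(x,y) ∈ ℝ^m × ℝ^s : v^l·x − u^l·y − σ^l ≥ 0, l = 1,…,L} with each (v^l,u^l) strictly positive, and let T = P ∩ (ℝ^m_+ × (ℝ^s_+ \ {0})). Assume ∂^s(P) = ∂^w(P). Then a point (x,y) ∈ T belongs to the strongly efficient frontier ∂^s(T) if and only if there exists an index l̄ ∈ {1,…,L} such that v^{l̄}·x − u^{l̄}·y − σ^{l̄} = 0. -/
/-!
If constraint `l` is active at `(x, y)`, then any point dominating `(x, y)` has a strictly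
smaller value of `vˡ·x − uˡ·y` (the weights are positive), so it violates constraint `l`.
If no constraint is active, all slacks are positive, and raising every output by a small
`ε > 0` gives a point of `T` that dominates `(x, y)`.
-/

noncomputable section

open Finset

/-- A point in input-output space: `m` inputs and `s` outputs. -/
abbrev Pt (m s : ℕ) := (Fin m → ℝ) × (Fin s → ℝ)

/-- Standard inner product. -/
def dot {n : ℕ} (v x : Fin n → ℝ) : ℝ := ∑ i, v i * x i

/-- Strongly efficient frontier: non-dominated points of `T`. -/
def strongF {m s : ℕ} (T : Set (Pt m s)) : Set (Pt m s) :=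
  {p | p ∈ T ∧ ∀ q : Pt m s,
    (∀ i, q.1 i ≤ p.1 i) → (∀ r, p.2 r ≤ q.2 r) → q ≠ p → q ∉ T}

/-- Weakly efficient frontier of `T`. -/
def weakF {m s : ℕ} (T : Set (Pt m s)) : Set (Pt m s) :=
  {p | p ∈ T ∧ ∀ q : Pt m s,
    (∀ i, q.1 i < p.1 i) → (∀ r, p.2 r < q.2 r) → q ∉ T}

/-- The polyhedron `P = {(x,y) : vˡ·x − uˡ·y − σˡ ≥ 0, l = 1,…,L}`. -/
def polyP {m s L : ℕ} (v : Fin L → Fin m → ℝ) (u : Fin L → Fin s → ℝ)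
    (σ : Fin L → ℝ) : Set (Pt m s) :=
  {p | ∀ l, 0 ≤ dot (v l) p.1 - dot (u l) p.2 - σ l}

/-- `T = P ∩ (ℝ^m_+ × (ℝ^s_+ \ {0}))`. -/
def TSet {m s L : ℕ} (v : Fin L → Fin m → ℝ) (u : Fin L → Fin s → ℝ)
    (σ : Fin L → ℝ) : Set (Pt m s) :=
  {p | p ∈ polyP v u σ ∧ (∀ i, 0 ≤ p.1 i) ∧ (∀ r, 0 ≤ p.2 r) ∧ p.2 ≠ 0}

section Dot

variable {n : ℕ} {v x y : Fin n → ℝ}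

lemma dot_add_const (v x : Fin n → ℝ) (c : ℝ) :
    dot v (fun i => x i + c) = dot v x + c * ∑ i, v i := by
  simp only [dot, mul_add, sum_add_distrib, sum_mul, mul_comm c]

lemma dot_le_dot (hv : ∀ i, 0 ≤ v i) (hxy : ∀ i, x i ≤ y i) : dot v x ≤ dot v y :=
  sum_le_sum fun i _ => mul_le_mul_of_nonneg_left (hxy i) (hv i)

lemma dot_lt_dot (hv : ∀ i, 0 < v i) (hxy : ∀ i, x i ≤ y i) (hne : x ≠ y) :
    dot v x < dot v y := by
  obtain ⟨i, hi⟩ := Function.ne_iff.mp hne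
  exact sum_lt_sum (fun j _ => mul_le_mul_of_nonneg_left (hxy j) (hv j).le)
    ⟨i, mem_univ i, mul_lt_mul_of_pos_left ((hxy i).lt_of_ne hi) (hv i)⟩

end Dot

open Filter Topology in
lemma exists_pos_forall_mul_le {ι : Type*} [Finite ι] (a b : ι → ℝ) (hb : ∀ i, 0 < b i) :
    ∃ ε > 0, ∀ i, ε * a i ≤ b i := by
  have hsmall : ∀ᶠ ε in 𝓝[>] (0 : ℝ), ∀ i, ε * a i < b i := by
    refine eventually_all.2 fun i => nhdsWithin_le_nhds ?_
    have hlim : Tendsto (fun ε : ℝ => ε * a i) (𝓝 0) (𝓝 0) := by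
      simpa using (continuous_mul_const (a i)).tendsto 0
    exact hlim.eventually (gt_mem_nhds (hb i))
  obtain ⟨ε, hlt, hε⟩ := (hsmall.and self_mem_nhdsWithin).exists
  exact ⟨ε, hε, fun i => (hlt i).le⟩

variable {m s L : ℕ} {v : Fin L → Fin m → ℝ} {u : Fin L → Fin s → ℝ} {σ : Fin L → ℝ}

theorem mem_strongF_of_active {S : Set (Pt m s)} (hS : S ⊆ polyP v u σ) {p : Pt m s}
    (hp : p ∈ S) {l : Fin L} (hv : ∀ i, 0 < v l i) (hu : ∀ r, 0 < u l r)
    (hl : dot (v l) p.1 - dot (u l) p.2 - σ l = 0) : p ∈ strongF S := by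
  refine ⟨hp, fun q hq1 hq2 hne hq => ?_⟩
  have hslack := hS hq l
  have hvq := dot_le_dot (fun i => (hv i).le) hq1
  have huq := dot_le_dot (fun r => (hu r).le) hq2
  rcases eq_or_ne q.1 p.1 with h1 | h1
  · linarith [dot_lt_dot hu hq2 fun h2 => hne (Prod.ext h1 h2.symm)]
  · linarith [dot_lt_dot hv hq1 h1]

theorem exists_active_of_mem_strongF_TSet {x : Fin m → ℝ} {y : Fin s → ℝ}
    (h : (x, y) ∈ strongF (TSet v u σ)) : ∃ l, dot (v l) x - dot (u l) y - σ l = 0 := by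
  obtain ⟨⟨hP, hx0, hy0, hy⟩, hdom⟩ := h
  by_contra! hinactive
  have hslack : ∀ l, 0 < dot (v l) x - dot (u l) y - σ l :=
    fun l => (hP l).lt_of_ne (hinactive l).symm
  obtain ⟨ε, hε, hεle⟩ := exists_pos_forall_mul_le (fun l => ∑ r, u l r) _ hslack
  obtain ⟨r₀, -⟩ := Function.ne_iff.mp hy
  have hshift : (x, fun r => y r + ε) ∈ TSet v u σ := by
    refine ⟨fun l => ?_, hx0, fun r => by linarith [hy0 r], fun h => ?_⟩
    · simp only [dot_add_const]
      linarith [hεle l]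
    · linarith [show y r₀ + ε = 0 from congrFun h r₀, hy0 r₀]
  refine hdom (x, fun r => y r + ε) (fun _ => le_rfl) (fun _ => le_add_of_nonneg_right hε.le)
    (fun h => ?_) hshift
  linarith [congrFun (congrArg Prod.snd h) r₀]

theorem stmt2_general {m s L : ℕ}
    (v : Fin L → Fin m → ℝ) (u : Fin L → Fin s → ℝ) (σ : Fin L → ℝ)
    (hpos : ∀ l, (∀ i, 0 < v l i) ∧ (∀ r, 0 < u l r))
    (x : Fin m → ℝ) (y : Fin s → ℝ) (hxy : (x, y) ∈ TSet v u σ) :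
    (x, y) ∈ strongF (TSet v u σ) ↔
      ∃ l, dot (v l) x - dot (u l) y - σ l = 0 :=
  ⟨exists_active_of_mem_strongF_TSet,
    fun ⟨l, hl⟩ => mem_strongF_of_active (fun _ hp => hp.1) hxy (hpos l).1 (hpos l).2 hl⟩

/-- a point of `T` is strongly efficient iff some constraint is active. -/
theorem stmt2 {m s L : ℕ}
    (v : Fin L → Fin m → ℝ) (u : Fin L → Fin s → ℝ) (σ : Fin L → ℝ)
    (hpos : ∀ l, (∀ i, 0 < v l i) ∧ (∀ r, 0 < u l r))
    (hσ : ∀ l, ∃ p ∈ polyP v u σ, dot (v l) p.1 - dot (u l) p.2 = σ l)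
    (hPfront : strongF (polyP v u σ) = weakF (polyP v u σ))
    (x : Fin m → ℝ) (y : Fin s → ℝ) (hxy : (x, y) ∈ TSet v u σ) :
    (x, y) ∈ strongF (TSet v u σ) ↔
      ∃ l, dot (v l) x - dot (u l) y - σ l = 0 :=
  stmt2_general v u σ hpos x y hxy
end
end

section
/- Let P = {(x,y) ∈ ℝ^m × ℝ^s : v^l·x − u^l·y − σ^l ≥ 0, l = 1,…,L} with each (v^l,u^l) strictly positive, and let T = P ∩ (ℝ^m_+ × (ℝ^s_+ \ {0})). Assume ∂^s(P) = ∂^w(P). Then (x,y) ∈ ∂^w(T) \ ∂^s(T) if and only if (i) x_ī = 0 for some index ī ∈ {1,…,m}, and (ii) v^l·x − u^l·y − σ^l > 0 for every l ∈ {1,…,L}. -/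
noncomputable section

open Finset

/-!
If `q ∈ T` dominates `p ≠ q`, strict positivity of the coefficients makes every constraint
strictly larger at `p` than at `q ≥ 0`, so all constraints are slack at `p`. Conversely, from a
slack point one can move a little in a dominating direction without leaving `P`: raising all
outputs by `ε` shows that `p` is not strongly efficient, and if all inputs are positive, lowering
them by `ε` as well shows that `p` is not even weakly efficient. A zero input makes weak
efficiency automatic, since no point of `T` has a negative input.
-/

section Dot

variable {n : ℕ} {v a b : Fin n → ℝ}

lemma dot_le_dot_s3 (hv : ∀ i, 0 ≤ v i) (h : a ≤ b) : dot v a ≤ dot v b :=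
  sum_le_sum fun i _ => mul_le_mul_of_nonneg_left (h i) (hv i)

lemma dot_lt_dot_s3 (hv : ∀ i, 0 < v i) (h : a < b) : dot v a < dot v b := by
  obtain ⟨hle, i, hi⟩ := Pi.lt_def.mp h
  exact sum_lt_sum (fun j _ => mul_le_mul_of_nonneg_left (hle j) (hv j).le)
    ⟨i, mem_univ i, mul_lt_mul_of_pos_left hi (hv i)⟩

@[fun_prop]
lemma continuous_dot (v : Fin n → ℝ) : Continuous (dot v) := by
  unfold dot
  fun_prop

end Dot

lemma sub_dot_lt_sub_dot_of_dominated {m s : ℕ} {v : Fin m → ℝ} {u : Fin s → ℝ}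
    (hv : ∀ i, 0 < v i) (hu : ∀ r, 0 < u r) {p q : Pt m s}
    (hx : q.1 ≤ p.1) (hy : p.2 ≤ q.2) (hne : q ≠ p) :
    dot v q.1 - dot u q.2 < dot v p.1 - dot u p.2 := by
  have hvx := dot_le_dot_s3 (fun i => (hv i).le) hx
  have huy := dot_le_dot_s3 (fun r => (hu r).le) hy
  rcases hx.lt_or_eq with hx | hx
  · linarith [dot_lt_dot_s3 hv hx]
  rcases hy.lt_or_eq with hy | hy
  · linarith [dot_lt_dot_s3 hu hy]
  exact absurd (Prod.ext hx hy.symm) hne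

lemma mem_weakF_of_fst_eq_zero {m s : ℕ} {T : Set (Pt m s)} (hT : ∀ q ∈ T, ∀ i, 0 ≤ q.1 i)
    {p : Pt m s} (hp : p ∈ T) {i : Fin m} (hi : p.1 i = 0) : p ∈ weakF T :=
  ⟨hp, fun q hx _ hq => (hT q hq i).not_gt (hi ▸ hx i)⟩

section Slack

variable {m s L : ℕ} {v : Fin L → Fin m → ℝ} {u : Fin L → Fin s → ℝ} {σ : Fin L → ℝ}

def slackP (v : Fin L → Fin m → ℝ) (u : Fin L → Fin s → ℝ) (σ : Fin L → ℝ) :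
    Set (Pt m s) :=
  {p | ∀ l, 0 < dot (v l) p.1 - dot (u l) p.2 - σ l}

lemma isOpen_slackP : IsOpen (slackP v u σ) := by
  simp only [slackP, Set.ofPred_forall]
  exact isOpen_iInter_of_finite fun l => isOpen_lt continuous_const (by fun_prop)

lemma slackP_subset_polyP : slackP v u σ ⊆ polyP v u σ :=
  fun _ hp l => (hp l).le

lemma mem_slackP_of_notMem_strongF (hpos : ∀ l, (∀ i, 0 < v l i) ∧ (∀ r, 0 < u l r))
    {T : Set (Pt m s)} (hT : T ⊆ polyP v u σ) {p : Pt m s} (hp : p ∈ T)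
    (hns : p ∉ strongF T) : p ∈ slackP v u σ := by
  simp only [strongF, Set.mem_ofPred_eq, not_and, not_forall, not_not] at hns
  obtain ⟨q, hx, hy, hne, hq⟩ := hns hp
  intro l
  linarith [sub_dot_lt_sub_dot_of_dominated (hpos l).1 (hpos l).2 hx hy hne, hT hq l]

lemma mk_add_const_mem_TSet {x x' : Fin m → ℝ} {y : Fin s → ℝ} (hp : (x, y) ∈ TSet v u σ)
    (hx' : ∀ i, 0 ≤ x' i) {ε : ℝ} (hε : 0 < ε)
    (hP : (x', fun r => y r + ε) ∈ polyP v u σ) : (x', fun r => y r + ε) ∈ TSet v u σ := by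
  have hy : ∀ r, 0 ≤ y r := hp.2.2.1
  obtain ⟨r, -⟩ := Function.ne_iff.mp hp.2.2.2
  refine ⟨hP, hx', fun r => by linarith [hy r], fun h => ?_⟩
  have hr : y r + ε = 0 := congrFun h r
  linarith [hy r]

lemma notMem_strongF_TSet_of_mem_slackP {x : Fin m → ℝ} {y : Fin s → ℝ}
    (hp : (x, y) ∈ TSet v u σ) (hs : (x, y) ∈ slackP v u σ) :
    (x, y) ∉ strongF (TSet v u σ) := by
  have hc : Continuous fun ε : ℝ => ((x, fun r => y r + ε) : Pt m s) := by fun_prop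
  obtain ⟨ε, hε, hεs⟩ := ((hc.tendsto' 0 (x, y) (by simp)).eventually_mem
    (isOpen_slackP.mem_nhds hs)).exists_gt
  have hq := mk_add_const_mem_TSet (x' := x) hp hp.2.1 hε (slackP_subset_polyP hεs)
  obtain ⟨r, -⟩ := Function.ne_iff.mp hp.2.2.2
  refine fun hS => hS.2 (x, fun r => y r + ε) (fun _ => le_rfl)
    (fun _ => le_add_of_nonneg_right hε.le) (fun h => ?_) hq
  have hr : y r + ε = y r := congrFun (congrArg Prod.snd h) r
  linarith

lemma notMem_weakF_TSet_of_mem_slackP {x : Fin m → ℝ} {y : Fin s → ℝ}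
    (hp : (x, y) ∈ TSet v u σ) (hs : (x, y) ∈ slackP v u σ) (hx : ∀ i, 0 < x i) :
    (x, y) ∉ weakF (TSet v u σ) := by
  have hc : Continuous fun ε : ℝ => ((fun i => x i - ε, fun r => y r + ε) : Pt m s) := by
    fun_prop
  have hU : IsOpen (slackP v u σ ∩ {q : Pt m s | ∀ i, 0 < q.1 i}) := by
    refine isOpen_slackP.inter ?_
    simp only [Set.ofPred_forall]
    exact isOpen_iInter_of_finite fun i => isOpen_lt continuous_const (by fun_prop)
  obtain ⟨ε, hε, hεs, hεx⟩ := ((hc.tendsto' 0 (x, y) (by simp)).eventually_mem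
    (hU.mem_nhds ⟨hs, hx⟩)).exists_gt
  have hq := mk_add_const_mem_TSet hp (fun i => (hεx i).le) hε (slackP_subset_polyP hεs)
  exact fun hW => hW.2 (fun i => x i - ε, fun r => y r + ε) (fun _ => sub_lt_self _ hε)
    (fun _ => lt_add_of_pos_right _ hε) hq

end Slack

theorem stmt3_general {m s L : ℕ}
    (v : Fin L → Fin m → ℝ) (u : Fin L → Fin s → ℝ) (σ : Fin L → ℝ)
    (hpos : ∀ l, (∀ i, 0 < v l i) ∧ (∀ r, 0 < u l r))
    (x : Fin m → ℝ) (y : Fin s → ℝ) :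
    (x, y) ∈ weakF (TSet v u σ) \ strongF (TSet v u σ) ↔
      ((x, y) ∈ TSet v u σ ∧ (∃ i, x i = 0) ∧
        ∀ l, 0 < dot (v l) x - dot (u l) y - σ l) := by
  constructor
  · rintro ⟨hW, hnS⟩
    have hs : (x, y) ∈ slackP v u σ :=
      mem_slackP_of_notMem_strongF hpos (fun _ hq => hq.1) hW.1 hnS
    refine ⟨hW.1, ?_, hs⟩
    by_contra! hx
    exact notMem_weakF_TSet_of_mem_slackP hW.1 hs (fun i => (hW.1.2.1 i).lt_of_ne' (hx i)) hW
  · rintro ⟨hT, ⟨i, hi⟩, hs⟩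
    exact ⟨mem_weakF_of_fst_eq_zero (fun _ hq => hq.2.1) hT hi,
      notMem_strongF_TSet_of_mem_slackP hT hs⟩

/-- a point of `T` is weakly but not strongly efficient iff some input is
zero and every constraint is strictly slack. -/
theorem stmt3 {m s L : ℕ}
    (v : Fin L → Fin m → ℝ) (u : Fin L → Fin s → ℝ) (σ : Fin L → ℝ)
    (hpos : ∀ l, (∀ i, 0 < v l i) ∧ (∀ r, 0 < u l r))
    (hσ : ∀ l, ∃ p ∈ polyP v u σ, dot (v l) p.1 - dot (u l) p.2 = σ l)
    (hPfront : strongF (polyP v u σ) = weakF (polyP v u σ))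
    (x : Fin m → ℝ) (y : Fin s → ℝ) :
    (x, y) ∈ weakF (TSet v u σ) \ strongF (TSet v u σ) ↔
      ((x, y) ∈ TSet v u σ ∧ (∃ i, x i = 0) ∧
        ∀ l, 0 < dot (v l) x - dot (u l) y - σ l) :=
  stmt3_general v u σ hpos x y
end
end

section
/- Let T be a production possibility set as above with ∂^s(P) = ∂^w(P), and for (x,y) ∈ T define the extended max Russell graph measure F̂(x,y;T) = max{ (1/(m+s))(Σ_i θ_i + Σ_r 1/φ_r) : (θ⊗x, φ⊗y) ∈ ∂^s(T), 0 ≤ θ ≤ 1_m, φ ≥ 1_s }. Then this maximum is attained (F̂ is well-defined) and F̂(x,y;T) > 1 − 1/(m+s). -/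
noncomputable section

open Finset

/-!
For points of `T`, strong efficiency in `T` is the same as weak efficiency in `P`: inputs of a
dominating point of `P` can be clipped at `0`, and `∂ˢ(P) = ∂ʷ(P)`. Weak efficiency in `P` is a
closed condition. Raising one positive output `y r₀` until some constraint of `P` becomes tight
gives a weakly efficient point with `θ = 1` and `φ = 1` except at `r₀`, whose value exceeds
`1 − 1/(m+s)`. The maximum is attained because, once `φ r` is capped at `1` on the outputs with
`y r = 0` (which leaves the scaled point unchanged and only raises the objective), one constraint
of `P` bounds all the remaining `φ r`, so the feasible region becomes compact.
-/

theorem IsCompact.exists_isGreatest_image_of_forall_le {α β : Type*} [TopologicalSpace α]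
    [TopologicalSpace β] [LinearOrder β] [OrderClosedTopology β] {f : α → β} {K S : Set α}
    (hK : IsCompact K) (hKS : K ⊆ S) (hS : S.Nonempty) (hf : ContinuousOn f K)
    (hdom : ∀ p ∈ S, ∃ q ∈ K, f p ≤ f q) : ∃ g, IsGreatest (f '' S) g := by
  obtain ⟨q, hqK, -⟩ := hdom _ hS.some_mem
  obtain ⟨qmax, hqmax, hmax⟩ := hK.exists_isMaxOn ⟨q, hqK⟩ hf
  refine ⟨f qmax, Set.mem_image_of_mem f (hKS hqmax), ?_⟩
  rintro _ ⟨p, hp, rfl⟩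
  obtain ⟨q, hq, hle⟩ := hdom p hp
  exact hle.trans (hmax hq)

lemma dot_le_dot_s7 {n : ℕ} {w a b : Fin n → ℝ} (hw : 0 ≤ w) (h : a ≤ b) : dot w a ≤ dot w b :=
  dotProduct_le_dotProduct_of_nonneg_left h hw

lemma dot_lt_dot_s7 {n : ℕ} {w a b : Fin n → ℝ} (hw : ∀ i, 0 < w i) (h : ∀ i, a i < b i)
    (i₀ : Fin n) : dot w a < dot w b :=
  Finset.sum_lt_sum_of_nonempty ⟨i₀, mem_univ i₀⟩ fun i _ => mul_lt_mul_of_pos_left (h i) (hw i)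

lemma dot_mul_one_add_single {n : ℕ} (w y : Fin n → ℝ) (r : Fin n) (δ : ℝ) :
    dot w ((1 + Pi.single r δ) * y) = dot w y + δ * (w r * y r) := by
  rw [add_mul, one_mul, ← Pi.single_mul_left]
  simp only [dot, ← dotProduct.eq_1, dotProduct_add, dotProduct_single]
  ring

lemma isClosed_polyP {m s L : ℕ} (v : Fin L → Fin m → ℝ) (u : Fin L → Fin s → ℝ)
    (σ : Fin L → ℝ) : IsClosed (polyP v u σ) := by
  simp only [polyP, Set.ofPred_forall]
  exact isClosed_iInter fun l => isClosed_le continuous_const (by unfold dot; fun_prop)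

lemma isClosed_weakF {m s : ℕ} {T : Set (Pt m s)} (hT : IsClosed T) :
    IsClosed (weakF T) := by
  have : weakF T = T ∩ ⋂ q ∈ T, {p : Pt m s | (∃ i, p.1 i ≤ q.1 i) ∨ ∃ r, q.2 r ≤ p.2 r} := by
    ext p
    simp only [weakF, Set.mem_inter_iff, Set.mem_iInter, Set.mem_ofPred_eq]
    grind
  rw [this]
  refine hT.inter (isClosed_biInter fun q _ => ?_)
  simp only [Set.ofPred_or, Set.ofPred_exists]
  exact (isClosed_iUnion_of_finite fun i => isClosed_le (by fun_prop) continuous_const).union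
    (isClosed_iUnion_of_finite fun r => isClosed_le continuous_const (by fun_prop))

def scalePt {m s : ℕ} (x : Fin m → ℝ) (y : Fin s → ℝ) (p : Pt m s) : Pt m s :=
  (p.1 * x, p.2 * y)

def russellObjective (m s : ℕ) (p : Pt m s) : ℝ :=
  (1 / (m + s : ℝ)) * ((∑ i, p.1 i) + ∑ r, 1 / p.2 r)

def russellFeasible {m s L : ℕ} (v : Fin L → Fin m → ℝ) (u : Fin L → Fin s → ℝ)
    (σ : Fin L → ℝ) (x : Fin m → ℝ) (y : Fin s → ℝ) : Set (Pt m s) :=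
  {p | (∀ i, 0 ≤ p.1 i ∧ p.1 i ≤ 1) ∧ (∀ r, 1 ≤ p.2 r) ∧
    scalePt x y p ∈ strongF (TSet v u σ)}

lemma continuousOn_russellObjective {m s : ℕ} :
    ContinuousOn (russellObjective m s) {p | ∀ r, p.2 r ≠ 0} := by
  unfold russellObjective
  fun_prop (disch := intro p hp; exact hp _)

lemma one_sub_lt_russellObjective {m s : ℕ} (r₀ : Fin s) {δ : ℝ} (hδ : 0 ≤ δ) :
    1 - 1 / (m + s : ℝ) < russellObjective m s (1, 1 + Pi.single r₀ δ) := by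
  have hinv : ∀ r, 1 / (1 + Pi.single r₀ δ : Fin s → ℝ) r =
      1 + (Pi.single r₀ (1 / (1 + δ) - 1) : Fin s → ℝ) r := by
    intro r
    by_cases hr : r = r₀ <;> simp [hr]
  have hN : (0 : ℝ) < m + s := by
    have : (1 : ℝ) ≤ s := by exact_mod_cast Fin.pos r₀
    positivity
  simp only [russellObjective, hinv, Finset.sum_add_distrib, Finset.sum_pi_single',
    Pi.one_apply, Finset.sum_const, Finset.card_univ, Fintype.card_fin, nsmul_eq_mul, mul_one,
    mem_univ, if_true]
  calc 1 - 1 / (m + s : ℝ) < 1 - 1 / (m + s) + 1 / (1 + δ) / (m + s) :=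
        lt_add_of_pos_right _ (by positivity)
    _ = 1 / (m + s) * (m + (s + (1 / (1 + δ) - 1))) := by field_simp; ring

section Russell

variable {m s L : ℕ} {v : Fin L → Fin m → ℝ} {u : Fin L → Fin s → ℝ} {σ : Fin L → ℝ}
  {x : Fin m → ℝ} {y : Fin s → ℝ}

lemma mem_weakF_polyP_of_tight (hpos : ∀ l, (∀ i, 0 < v l i) ∧ (∀ r, 0 < u l r))
    (r₀ : Fin s) {p : Pt m s} (hp : p ∈ polyP v u σ) {l : Fin L}
    (htight : dot (v l) p.1 - dot (u l) p.2 - σ l = 0) :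
    p ∈ weakF (polyP v u σ) := by
  refine ⟨hp, fun q hq₁ hq₂ hq => ?_⟩
  have hv := dot_le_dot_s7 (fun i => (hpos l).1 i |>.le) fun i => (hq₁ i).le
  have hu := dot_lt_dot_s7 (hpos l).2 hq₂ r₀
  linarith [hq l]

lemma mem_strongF_TSet_iff (hpos : ∀ l, (∀ i, 0 < v l i) ∧ (∀ r, 0 < u l r))
    (hPfront : strongF (polyP v u σ) = weakF (polyP v u σ))
    {p : Pt m s} (hp : p ∈ TSet v u σ) :
    p ∈ strongF (TSet v u σ) ↔ p ∈ weakF (polyP v u σ) := by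
  obtain ⟨hpP, hp₁, hp₂, hpne⟩ := hp
  obtain ⟨r₀, hr₀⟩ := Function.ne_iff.mp hpne
  constructor
  · refine fun hstrong => ⟨hpP, fun q hq₁ hq₂ hq => ?_⟩
    -- clipping the inputs at `0` keeps `q` in `P`, since all `vˡ` are positive
    have hq' : (q.1 ⊔ 0, q.2) ∈ TSet v u σ := by
      refine ⟨fun l => ?_, fun i => le_sup_right, fun r => (hp₂ r).trans (hq₂ r).le, ?_⟩
      · have := dot_le_dot_s7 (fun i => (hpos l).1 i |>.le) (le_sup_left : q.1 ≤ q.1 ⊔ 0)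
        linarith [hq l]
      · exact Function.ne_iff.mpr ⟨r₀, ((hp₂ r₀).trans_lt (hq₂ r₀)).ne'⟩
    refine hstrong.2 (q.1 ⊔ 0, q.2) (fun i => sup_le (hq₁ i).le (hp₁ i)) (fun r => (hq₂ r).le)
      ?_ hq'
    exact fun h => (hq₂ r₀).ne (congrFun (congrArg Prod.snd h) r₀).symm
  · intro hweak
    rw [← hPfront] at hweak
    exact ⟨⟨hpP, hp₁, hp₂, hpne⟩, fun q hq₁ hq₂ hne hq => hweak.2 q hq₁ hq₂ hne hq.1⟩

lemma scalePt_mem_TSet (hxy : (x, y) ∈ TSet v u σ) {p : Pt m s} (hθ : ∀ i, 0 ≤ p.1 i)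
    (hφ : ∀ r, 1 ≤ p.2 r) (hp : scalePt x y p ∈ polyP v u σ) : scalePt x y p ∈ TSet v u σ := by
  obtain ⟨-, hx, hy, hyne⟩ := hxy
  obtain ⟨r₀, hr₀⟩ := Function.ne_iff.mp hyne
  refine ⟨hp, fun i => mul_nonneg (hθ i) (hx i), fun r => mul_nonneg (by linarith [hφ r]) (hy r),
    Function.ne_iff.mpr ⟨r₀, mul_ne_zero (by linarith [hφ r₀]) hr₀⟩⟩

lemma mem_russellFeasible_iff (hpos : ∀ l, (∀ i, 0 < v l i) ∧ (∀ r, 0 < u l r))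
    (hPfront : strongF (polyP v u σ) = weakF (polyP v u σ)) (hxy : (x, y) ∈ TSet v u σ)
    {p : Pt m s} : p ∈ russellFeasible v u σ x y ↔
      (∀ i, 0 ≤ p.1 i ∧ p.1 i ≤ 1) ∧ (∀ r, 1 ≤ p.2 r) ∧ scalePt x y p ∈ weakF (polyP v u σ) := by
  refine and_congr_right fun hθ => and_congr_right fun hφ => ⟨fun h => ?_, fun h => ?_⟩
  · exact (mem_strongF_TSet_iff hpos hPfront h.1).mp h
  · exact (mem_strongF_TSet_iff hpos hPfront
      (scalePt_mem_TSet hxy (fun i => (hθ i).1) hφ h.1)).mpr h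

lemma mul_le_of_scalePt_mem_polyP (hpos : ∀ l, (∀ i, 0 < v l i) ∧ (∀ r, 0 < u l r))
    (hx : ∀ i, 0 ≤ x i) (hy : ∀ r, 0 ≤ y r) {p : Pt m s} (hθ : ∀ i, p.1 i ≤ 1)
    (hφ : ∀ r, 0 ≤ p.2 r) (hp : scalePt x y p ∈ polyP v u σ) (l : Fin L) (r : Fin s) :
    p.2 r * (u l r * y r) ≤ dot (v l) x - σ l := by
  have hin : dot (v l) (p.1 * x) ≤ dot (v l) x :=
    dot_le_dot_s7 (fun i => ((hpos l).1 i).le) fun i => mul_le_of_le_one_left (hx i) (hθ i)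
  have hout : u l r * (p.2 r * y r) ≤ dot (u l) (p.2 * y) :=
    Finset.single_le_sum (f := fun t => u l t * (p.2 t * y t))
      (fun t _ => mul_nonneg ((hpos l).2 t).le (mul_nonneg (hφ t) (hy t))) (mem_univ r)
  have hslack : 0 ≤ dot (v l) (p.1 * x) - dot (u l) (p.2 * y) - σ l := hp l
  rw [mul_left_comm]
  linarith

lemma exists_isGreatest_russellObjective (hL : 0 < L)
    (hpos : ∀ l, (∀ i, 0 < v l i) ∧ (∀ r, 0 < u l r))
    (hPfront : strongF (polyP v u σ) = weakF (polyP v u σ)) (hxy : (x, y) ∈ TSet v u σ)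
    (hne : (russellFeasible v u σ x y).Nonempty) :
    ∃ g, IsGreatest (russellObjective m s '' russellFeasible v u σ x y) g := by
  have hfeas := fun p => mem_russellFeasible_iff (p := p) hpos hPfront hxy
  obtain ⟨-, hx, hy, -⟩ := hxy
  set l : Fin L := ⟨0, hL⟩
  -- `C r` bounds `φ r` only where `y r ≠ 0`; elsewhere `φ r ⊓ C r` gives the same scaled point
  set C : Fin s → ℝ := fun r => max 1 ((dot (v l) x - σ l) / (u l r * y r))
  have hC : ∀ p ∈ russellFeasible v u σ x y, ∀ r, y r ≠ 0 → p.2 r ≤ C r := by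
    intro p hp r hr
    obtain ⟨hθ, hφ, hw⟩ := (hfeas p).mp hp
    refine le_max_of_le_right ((le_div_iff₀ ?_).mpr ?_)
    · exact mul_pos ((hpos l).2 r) ((hy r).lt_of_ne' hr)
    · exact mul_le_of_scalePt_mem_polyP hpos hx hy (fun i => (hθ i).2)
        (fun r => zero_le_one.trans (hφ r)) hw.1 l r
  have hK : russellFeasible v u σ x y ∩ {p | p.2 ≤ C} =
      (Set.Icc 0 1 ×ˢ Set.Icc 1 C) ∩ scalePt x y ⁻¹' weakF (polyP v u σ) := by
    ext p
    simp only [Set.mem_inter_iff, hfeas, Set.mem_prod, Set.mem_Icc, Set.mem_preimage,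
      Set.mem_ofPred_eq, Pi.le_def, Pi.zero_apply, Pi.one_apply]
    grind
  refine IsCompact.exists_isGreatest_image_of_forall_le
    (K := russellFeasible v u σ x y ∩ {p | p.2 ≤ C}) ?_ Set.inter_subset_left hne ?_
    fun p hp => ⟨(p.1, p.2 ⊓ C), ⟨?_, (inf_le_right : p.2 ⊓ C ≤ C)⟩, ?_⟩
  · rw [hK]
    refine (isCompact_Icc.prod isCompact_Icc).inter_right
      ((isClosed_weakF (isClosed_polyP v u σ)).preimage ?_)
    unfold scalePt
    fun_prop
  · refine continuousOn_russellObjective.mono fun p hp r => ?_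
    linarith [((hfeas p).mp hp.1).2.1 r]
  · obtain ⟨hθ, hφ, hw⟩ := (hfeas p).mp hp
    have hscale : scalePt x y (p.1, p.2 ⊓ C) = scalePt x y p := by
      refine Prod.ext rfl (funext fun r => ?_)
      by_cases hr : y r = 0
      · simp [scalePt, hr]
      · simp [scalePt, inf_eq_left.mpr (hC p hp r hr)]
    exact (hfeas _).mpr ⟨hθ, fun r => le_inf (hφ r) (le_max_left _ _), hscale ▸ hw⟩
  · have hφ := ((hfeas p).mp hp).2.1
    unfold russellObjective
    gcongr with r
    · exact lt_inf_iff.mpr ⟨zero_lt_one.trans_le (hφ r), zero_lt_one.trans_le (le_max_left _ _)⟩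
    · exact inf_le_left

lemma exists_output_expansion_mem_weakF (hL : 0 < L)
    (hpos : ∀ l, (∀ i, 0 < v l i) ∧ (∀ r, 0 < u l r)) (hxy : (x, y) ∈ polyP v u σ)
    {r₀ : Fin s} (hr₀ : 0 < y r₀) :
    ∃ δ, 0 ≤ δ ∧ scalePt x y (1, 1 + Pi.single r₀ δ) ∈ weakF (polyP v u σ) := by
  have hden : ∀ l, 0 < u l r₀ * y r₀ := fun l => mul_pos ((hpos l).2 r₀) hr₀
  -- `d l` is how far output `r₀` can be raised, in units of `y r₀`, before constraint `l` fails
  set d : Fin L → ℝ := fun l => (dot (v l) x - dot (u l) y - σ l) / (u l r₀ * y r₀)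
  obtain ⟨l₀, -, hmin⟩ := Finset.exists_min_image univ d ⟨⟨0, hL⟩, mem_univ _⟩
  have hslack : ∀ l, dot (v l) (1 * x) - dot (u l) ((1 + Pi.single r₀ (d l₀)) * y) - σ l =
      (dot (v l) x - dot (u l) y - σ l) - d l₀ * (u l r₀ * y r₀) := by
    intro l
    rw [one_mul, dot_mul_one_add_single]
    ring
  refine ⟨d l₀, div_nonneg (hxy l₀) (hden l₀).le, ?_⟩
  refine mem_weakF_polyP_of_tight hpos r₀ (l := l₀) (fun l => ?_) ?_
  · rw [scalePt, hslack, sub_nonneg, ← le_div_iff₀ (hden l)]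
    exact hmin l (mem_univ l)
  · rw [scalePt, hslack, div_mul_cancel₀ _ (hden l₀).ne', sub_self]

lemma exists_mem_russellFeasible_lt (hL : 0 < L)
    (hpos : ∀ l, (∀ i, 0 < v l i) ∧ (∀ r, 0 < u l r))
    (hPfront : strongF (polyP v u σ) = weakF (polyP v u σ)) (hxy : (x, y) ∈ TSet v u σ) :
    ∃ p ∈ russellFeasible v u σ x y, 1 - 1 / (m + s : ℝ) < russellObjective m s p := by
  obtain ⟨hP, -, hy, hyne⟩ := id hxy
  obtain ⟨r₀, hr₀⟩ := Function.ne_iff.mp hyne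
  obtain ⟨δ, hδ, hw⟩ := exists_output_expansion_mem_weakF hL hpos hP ((hy r₀).lt_of_ne' hr₀)
  refine ⟨(1, 1 + Pi.single r₀ δ), ?_, one_sub_lt_russellObjective r₀ hδ⟩
  refine (mem_russellFeasible_iff hpos hPfront hxy).mpr ⟨fun i => ⟨zero_le_one, le_rfl⟩, ?_, hw⟩
  exact (le_add_of_nonneg_right (Pi.single_nonneg.mpr hδ) : (1 : Fin s → ℝ) ≤ 1 + _)

end Russell

theorem stmt7_general {m s L : ℕ} (hL : 0 < L)
    (v : Fin L → Fin m → ℝ) (u : Fin L → Fin s → ℝ) (σ : Fin L → ℝ)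
    (hpos : ∀ l, (∀ i, 0 < v l i) ∧ (∀ r, 0 < u l r))
    (hPfront : strongF (polyP v u σ) = weakF (polyP v u σ))
    (x : Fin m → ℝ) (y : Fin s → ℝ) (hxy : (x, y) ∈ TSet v u σ) :
    ∃ g, IsGreatest {t : ℝ | ∃ (θ : Fin m → ℝ) (φ : Fin s → ℝ),
        (∀ i, 0 ≤ θ i ∧ θ i ≤ 1) ∧ (∀ r, 1 ≤ φ r) ∧
        ((fun i => θ i * x i), (fun r => φ r * y r)) ∈ strongF (TSet v u σ) ∧
        t = (1 / (m + s : ℝ)) * ((∑ i, θ i) + ∑ r, 1 / φ r)} g ∧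
      1 - 1 / (m + s : ℝ) < g := by
  obtain ⟨p₀, hp₀, hval⟩ := exists_mem_russellFeasible_lt hL hpos hPfront hxy
  obtain ⟨g, hg⟩ := exists_isGreatest_russellObjective hL hpos hPfront hxy ⟨p₀, hp₀⟩
  refine ⟨g, ?_, hval.trans_le (hg.2 ⟨p₀, hp₀, rfl⟩)⟩
  convert hg using 1
  ext t
  constructor
  · rintro ⟨θ, φ, hθ, hφ, hmem, rfl⟩
    exact ⟨(θ, φ), ⟨hθ, hφ, hmem⟩, rfl⟩
  · rintro ⟨⟨θ, φ⟩, ⟨hθ, hφ, hmem⟩, rfl⟩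
    exact ⟨θ, φ, hθ, hφ, hmem, rfl⟩

/-- the extended max Russell graph measure is well-defined (the maximum
is attained) and exceeds `1 − 1/(m+s)`. -/
theorem stmt7 {m s L : ℕ} (hms : 0 < m + s) (hL : 0 < L)
    (v : Fin L → Fin m → ℝ) (u : Fin L → Fin s → ℝ) (σ : Fin L → ℝ)
    (hpos : ∀ l, (∀ i, 0 < v l i) ∧ (∀ r, 0 < u l r))
    (hσ : ∀ l, ∃ p ∈ polyP v u σ, dot (v l) p.1 - dot (u l) p.2 = σ l)
    (hPfront : strongF (polyP v u σ) = weakF (polyP v u σ))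
    (x : Fin m → ℝ) (y : Fin s → ℝ) (hxy : (x, y) ∈ TSet v u σ) :
    ∃ g, IsGreatest {t : ℝ | ∃ (θ : Fin m → ℝ) (φ : Fin s → ℝ),
        (∀ i, 0 ≤ θ i ∧ θ i ≤ 1) ∧ (∀ r, 1 ≤ φ r) ∧
        ((fun i => θ i * x i), (fun r => φ r * y r)) ∈ strongF (TSet v u σ) ∧
        t = (1 / (m + s : ℝ)) * ((∑ i, θ i) + ∑ r, 1 / φ r)} g ∧
      1 - 1 / (m + s : ℝ) < g :=
  stmt7_general hL v u σ hpos hPfront x y hxy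
end
end

section
/- Let T be a PPS with ∂^s(P) = ∂^w(P) and F̂ the extended max Russell graph measure: F̂(x,y;T) = max{ (1/(m+s))(Σ_i θ_i + Σ_r 1/φ_r) : (θ⊗x, φ⊗y) ∈ ∂^s(T), 0 ≤ θ ≤ 1_m, φ ≥ 1_s }. Then for all (x,y) ∈ T, F̂(x,y;T) = 1 if and only if (x,y) ∈ ∂^s(T) (indication property). -/
/-!
Every feasible `(θ, φ)` has `θ ≤ 1` and `1 / φ ≤ 1` componentwise, so the objective is at most `1`,
with equality exactly when `θ = 1` and `φ = 1`. Hence `F̂ = 1` forces the optimal contraction to be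
trivial, so `(x, y)` itself is non-dominated; conversely a non-dominated `(x, y)` makes `(1, 1)`
feasible with objective `1`.
-/

noncomputable section

open Finset

section RussellObjective

variable {ι κ : Type*} [Fintype ι] [Fintype κ]

lemma sum_le_card_of_le_one {f : ι → ℝ} (hf : ∀ i, f i ≤ 1) : ∑ i, f i ≤ Fintype.card ι := by
  simpa using sum_le_card_nsmul univ f 1 fun i _ => hf i

lemma sum_eq_card_iff_of_le_one {f : ι → ℝ} (hf : ∀ i, f i ≤ 1) :
    ∑ i, f i = Fintype.card ι ↔ f = 1 := by
  simpa [funext_iff] using sum_eq_sum_iff_of_le (s := univ) (g := fun _ => (1 : ℝ)) fun i _ => hf i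

lemma one_div_le_one_of_one_le {a : ℝ} (ha : 1 ≤ a) : 1 / a ≤ 1 :=
  (div_le_one (one_pos.trans_le ha)).2 ha

variable {θ : ι → ℝ} {φ : κ → ℝ}

lemma sum_add_sum_one_div_le (hθ : ∀ i, θ i ≤ 1) (hφ : ∀ r, 1 ≤ φ r) :
    ∑ i, θ i + ∑ r, 1 / φ r ≤ Fintype.card ι + Fintype.card κ :=
  add_le_add (sum_le_card_of_le_one hθ)
    (sum_le_card_of_le_one fun r => one_div_le_one_of_one_le (hφ r))

lemma sum_add_sum_one_div_eq_iff (hθ : ∀ i, θ i ≤ 1) (hφ : ∀ r, 1 ≤ φ r) :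
    ∑ i, θ i + ∑ r, 1 / φ r = Fintype.card ι + Fintype.card κ ↔ θ = 1 ∧ φ = 1 := by
  have hφ' : ∀ r, 1 / φ r ≤ 1 := fun r => one_div_le_one_of_one_le (hφ r)
  rw [add_eq_add_iff_eq_and_eq (sum_le_card_of_le_one hθ) (sum_le_card_of_le_one hφ'),
    sum_eq_card_iff_of_le_one hθ, sum_eq_card_iff_of_le_one hφ']
  simp [funext_iff]

end RussellObjective

section FinObjective

variable {m s : ℕ} {θ : Fin m → ℝ} {φ : Fin s → ℝ}

lemma one_div_mul_sum_add_sum_one_div_le_one (hms : 0 < m + s)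
    (hθ : ∀ i, θ i ≤ 1) (hφ : ∀ r, 1 ≤ φ r) :
    1 / (m + s : ℝ) * (∑ i, θ i + ∑ r, 1 / φ r) ≤ 1 := by
  rw [one_div_mul_eq_div, div_le_one (mod_cast hms)]
  simpa using sum_add_sum_one_div_le hθ hφ

lemma one_div_mul_sum_add_sum_one_div_eq_one_iff (hms : 0 < m + s)
    (hθ : ∀ i, θ i ≤ 1) (hφ : ∀ r, 1 ≤ φ r) :
    1 / (m + s : ℝ) * (∑ i, θ i + ∑ r, 1 / φ r) = 1 ↔ θ = 1 ∧ φ = 1 := by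
  rw [one_div_mul_eq_div, div_eq_one_iff_eq (mod_cast hms.ne')]
  simpa using sum_add_sum_one_div_eq_iff hθ hφ

end FinObjective

theorem stmt9_general {m s L : ℕ} (hms : 0 < m + s)
    (v : Fin L → Fin m → ℝ) (u : Fin L → Fin s → ℝ) (σ : Fin L → ℝ)
    (x : Fin m → ℝ) (y : Fin s → ℝ)
    (F : ℝ)
    (hF : IsGreatest {t : ℝ | ∃ (θ : Fin m → ℝ) (φ : Fin s → ℝ),
        (∀ i, 0 ≤ θ i ∧ θ i ≤ 1) ∧ (∀ r, 1 ≤ φ r) ∧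
        ((fun i => θ i * x i), (fun r => φ r * y r)) ∈ strongF (TSet v u σ) ∧
        t = (1 / (m + s : ℝ)) * ((∑ i, θ i) + ∑ r, 1 / φ r)} F) :
    F = 1 ↔ (x, y) ∈ strongF (TSet v u σ) := by
  obtain ⟨θ, φ, hθ, hφ, hmem, rfl⟩ := hF.1
  have hθ1 : ∀ i, θ i ≤ 1 := fun i => (hθ i).2
  constructor
  · intro hF1
    obtain ⟨rfl, rfl⟩ := (one_div_mul_sum_add_sum_one_div_eq_one_iff hms hθ1 hφ).1 hF1
    simpa using hmem
  · intro hfront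
    have hfeas : (1 : ℝ) ≤ _ := hF.2 ⟨1, 1, fun _ => ⟨zero_le_one, le_rfl⟩, fun _ => le_rfl,
      by simpa using hfront,
      ((one_div_mul_sum_add_sum_one_div_eq_one_iff hms (fun _ => le_rfl) fun _ => le_rfl).2
        ⟨rfl, rfl⟩).symm⟩
    exact (one_div_mul_sum_add_sum_one_div_le_one hms hθ1 hφ).antisymm hfeas

/-- indication property of the extended max Russell graph measure. -/
theorem stmt9 {m s L : ℕ} (hms : 0 < m + s)
    (v : Fin L → Fin m → ℝ) (u : Fin L → Fin s → ℝ) (σ : Fin L → ℝ)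
    (hpos : ∀ l, (∀ i, 0 < v l i) ∧ (∀ r, 0 < u l r))
    (hσ : ∀ l, ∃ p ∈ polyP v u σ, dot (v l) p.1 - dot (u l) p.2 = σ l)
    (hPfront : strongF (polyP v u σ) = weakF (polyP v u σ))
    (x : Fin m → ℝ) (y : Fin s → ℝ) (hxy : (x, y) ∈ TSet v u σ)
    (F : ℝ)
    (hF : IsGreatest {t : ℝ | ∃ (θ : Fin m → ℝ) (φ : Fin s → ℝ),
        (∀ i, 0 ≤ θ i ∧ θ i ≤ 1) ∧ (∀ r, 1 ≤ φ r) ∧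
        ((fun i => θ i * x i), (fun r => φ r * y r)) ∈ strongF (TSet v u σ) ∧
        t = (1 / (m + s : ℝ)) * ((∑ i, θ i) + ∑ r, 1 / φ r)} F) :
    F = 1 ↔ (x, y) ∈ strongF (TSet v u σ) :=
  stmt9_general hms v u σ x y F hF
end
end

section
/- Let T be a PPS with ∂^s(P) = ∂^w(P) and F̂ the extended max Russell graph measure. Then F̂ satisfies strong monotonicity: for all (x,y), (x',y') ∈ T with (x',−y') ≤ (x,−y) componentwise and (x',−y') ≠ (x,−y), one has F̂(x',y';T) > F̂(x,y;T). -/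
/-!
A point of `T` at which some constraint of `P` is tight is weakly efficient in `P`, hence strongly
efficient in `P` (as `∂^s(P) = ∂^w(P)`) and in `T`. So it suffices, given an optimal `(θ, φ)` for
`(x, y)`, to find an admissible pair for `(x', y')` with a larger objective whose point has a tight
constraint.

If `(θ x', φ y')` lies outside `P`, move `(θ, φ)` towards `(1, 1)`: by the intermediate value
theorem some `α ∈ (0, 1]` puts `((α + (1 - α) θ) x', (α + (1 - α) φ) y')` in `P` with a tight
constraint, and the objective strictly increases since `(θ, φ) ≠ (1, 1)`.

Otherwise `(θ x', φ y')` lies in `T` and dominates the strongly efficient `(θ x, φ y)`, so the two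
coincide. Then `y' = y`, and `θ i = 0` at some `i` with `x' i < x i`, so the objective at `(x, y)`
is at most `m + s - 1`; pushing one output of `(x', y')` until a constraint becomes tight costs
less than `1`.
-/

noncomputable section

open Finset

def slack {m s L : ℕ} (v : Fin L → Fin m → ℝ) (u : Fin L → Fin s → ℝ) (σ : Fin L → ℝ)
    (l : Fin L) (p : Pt m s) : ℝ :=
  dot (v l) p.1 - dot (u l) p.2 - σ l

def russellSum {m s : ℕ} (θ : Fin m → ℝ) (φ : Fin s → ℝ) : ℝ :=
  ∑ i, θ i + ∑ r, 1 / φ r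

def RussellFeasible {m s : ℕ} (T : Set (Pt m s)) (x : Fin m → ℝ) (y : Fin s → ℝ)
    (θ : Fin m → ℝ) (φ : Fin s → ℝ) : Prop :=
  (∀ i, 0 ≤ θ i ∧ θ i ≤ 1) ∧ (∀ r, 1 ≤ φ r) ∧ (θ * x, φ * y) ∈ strongF T

theorem dot_eq_dotProduct {n : ℕ} (v x : Fin n → ℝ) : dot v x = v ⬝ᵥ x := rfl

theorem russellSum_lt_russellSum {m s : ℕ} {θ θ' : Fin m → ℝ} {φ φ' : Fin s → ℝ}
    (hθ : θ ≤ θ') (hφ' : ∀ r, 0 < φ' r) (hφ : φ' ≤ φ) (hne : θ ≠ θ' ∨ φ' ≠ φ) :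
    russellSum θ φ < russellSum θ' φ' := by
  have hinv : ∀ r, 1 / φ r ≤ 1 / φ' r := fun r => one_div_le_one_div_of_le (hφ' r) (hφ r)
  unfold russellSum
  rcases hne with hne | hne
  · obtain ⟨i, hi⟩ := Function.ne_iff.mp hne
    exact add_lt_add_of_lt_of_le
      (sum_lt_sum (fun i _ => hθ i) ⟨i, mem_univ i, (hθ i).lt_of_ne hi⟩)
      (sum_le_sum fun r _ => hinv r)
  · obtain ⟨r, hr⟩ := Function.ne_iff.mp hne
    exact add_lt_add_of_le_of_lt (sum_le_sum fun i _ => hθ i)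
      (sum_lt_sum (fun r _ => hinv r)
        ⟨r, mem_univ r, one_div_lt_one_div_of_lt (hφ' r) ((hφ r).lt_of_ne hr)⟩)

theorem russellSum_lt_russellSum_one_add_single {m s : ℕ} {θ : Fin m → ℝ} {φ : Fin s → ℝ}
    (hθ : ∀ i, θ i ≤ 1) {i₀ : Fin m} (hi₀ : θ i₀ = 0) (hφ : ∀ r, 1 ≤ φ r) {c : ℝ} (hc : 0 ≤ c)
    (r₀ : Fin s) : russellSum θ φ < russellSum (1 : Fin m → ℝ) (1 + c • Pi.single r₀ 1) := by
  have hθsum : ∑ i, θ i + 1 ≤ m := by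
    have := single_le_sum (f := fun i => 1 - θ i) (fun i _ => sub_nonneg.2 (hθ i)) (mem_univ i₀)
    simp only [hi₀, sub_zero, sum_sub_distrib, sum_const, card_univ, Fintype.card_fin,
      nsmul_eq_mul, mul_one] at this
    linarith
  have hφsum : ∑ r, 1 / φ r ≤ s := by
    calc ∑ r, 1 / φ r ≤ ∑ _r : Fin s, (1 : ℝ) :=
          sum_le_sum fun r _ => (div_le_one (zero_lt_one.trans_le (hφ r))).2 (hφ r)
      _ = s := by simp
  have hφ'sum : (s : ℝ) - 1 < ∑ r, 1 / (1 + c • Pi.single r₀ 1 : Fin s → ℝ) r := by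
    calc (s : ℝ) - 1 = ∑ r, (1 - Pi.single r₀ (1 : ℝ) r) := by simp [sum_sub_distrib]
      _ < _ := by
        refine sum_lt_sum (fun r _ => ?_) ⟨r₀, mem_univ r₀, ?_⟩
        · by_cases h : r = r₀
          · subst h
            simp only [Pi.single_eq_same, sub_self, Pi.add_apply, Pi.one_apply, Pi.smul_apply,
              smul_eq_mul, mul_one, one_div]
            positivity
          · simp [h]
        · simp only [Pi.single_eq_same, sub_self, Pi.add_apply, Pi.one_apply, Pi.smul_apply,
            smul_eq_mul, mul_one, one_div]
          positivity
  simp only [russellSum, Pi.one_apply, sum_const, card_univ, Fintype.card_fin, nsmul_eq_mul,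
    mul_one]
  linarith

section Frontier

variable {m s L : ℕ} {v : Fin L → Fin m → ℝ} {u : Fin L → Fin s → ℝ} {σ : Fin L → ℝ}

theorem mem_polyP_iff {p : Pt m s} : p ∈ polyP v u σ ↔ ∀ l, 0 ≤ slack v u σ l p := Iff.rfl

theorem continuous_slack (l : Fin L) : Continuous (slack v u σ l) := by
  unfold slack dot
  fun_prop

theorem slack_add_smul_snd (l : Fin L) (p : Pt m s) (c : ℝ) (d : Fin s → ℝ) :
    slack v u σ l (p.1, p.2 + c • d) = slack v u σ l p - c * dot (u l) d := by
  simp only [slack, dot_eq_dotProduct, dotProduct_add, dotProduct_smul, smul_eq_mul]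
  ring

theorem mem_weakF_polyP_of_slack_eq_zero [Nonempty (Fin s)] {p : Pt m s} {l : Fin L}
    (hv : ∀ i, 0 ≤ v l i) (hu : ∀ r, 0 < u l r) (hp : p ∈ polyP v u σ)
    (hl : slack v u σ l p = 0) : p ∈ weakF (polyP v u σ) := by
  refine ⟨hp, fun q hq₁ hq₂ hq => ?_⟩
  have hin : dot (v l) q.1 ≤ dot (v l) p.1 :=
    dotProduct_le_dotProduct_of_nonneg_left (fun i => (hq₁ i).le) hv
  have hout : dot (u l) p.2 < dot (u l) q.2 :=
    sum_lt_sum (fun r _ => mul_le_mul_of_nonneg_left (hq₂ r).le (hu r).le)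
      ⟨Classical.arbitrary _, mem_univ _, mul_lt_mul_of_pos_left (hq₂ _) (hu _)⟩
  have := hq l
  unfold slack at hl
  linarith

theorem mem_strongF_TSet_of_slack_eq_zero (hpos : ∀ l, (∀ i, 0 < v l i) ∧ (∀ r, 0 < u l r))
    (hPfront : strongF (polyP v u σ) = weakF (polyP v u σ)) {p : Pt m s} (hp : p ∈ TSet v u σ)
    {l : Fin L} (hl : slack v u σ l p = 0) : p ∈ strongF (TSet v u σ) := by
  obtain ⟨r, -⟩ := Function.ne_iff.mp hp.2.2.2
  have : Nonempty (Fin s) := ⟨r⟩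
  have hpP : p ∈ strongF (polyP v u σ) := hPfront ▸
    mem_weakF_polyP_of_slack_eq_zero (fun i => ((hpos l).1 i).le) (hpos l).2 hp.1 hl
  exact ⟨hp, fun q hq₁ hq₂ hne hq => hpP.2 q hq₁ hq₂ hne hq.1⟩

theorem mul_mem_TSet {x θ : Fin m → ℝ} {y φ : Fin s → ℝ} (hxy : (x, y) ∈ TSet v u σ)
    (hθ : ∀ i, 0 ≤ θ i) (hφ : ∀ r, 0 < φ r) (hP : (θ * x, φ * y) ∈ polyP v u σ) :
    (θ * x, φ * y) ∈ TSet v u σ := by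
  obtain ⟨-, hx, hy, hy₀⟩ := hxy
  refine ⟨hP, fun i => mul_nonneg (hθ i) (hx i), fun r => mul_nonneg (hφ r).le (hy r),
    fun h => hy₀ (funext fun r => ?_)⟩
  exact (mul_eq_zero.mp (congrFun h r)).resolve_left (hφ r).ne'

theorem nonempty_of_mem_strongF_TSet {p : Pt m s} (hp : p ∈ strongF (TSet v u σ)) :
    Nonempty (Fin L) := by
  by_contra hL
  obtain ⟨⟨-, hp₁, hp₂, hp₀⟩, hdom⟩ := hp
  obtain ⟨r, -⟩ := Function.ne_iff.mp hp₀
  have hle : ∀ r, p.2 r ≤ (p.2 + 1) r := fun r => by simp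
  have hq : (p.1, p.2 + 1) ∈ TSet v u σ := by
    refine ⟨fun l => (hL ⟨l⟩).elim, hp₁, fun r => (hp₂ r).trans (hle r), fun h => ?_⟩
    have := congrFun h r
    simp only [Pi.add_apply, Pi.one_apply, Pi.zero_apply] at this
    linarith [hp₂ r]
  refine hdom (p.1, p.2 + 1) (fun _ => le_rfl) hle (fun h => ?_) hq
  have := congrFun (congrArg Prod.snd h) r
  simp at this

theorem exists_slack_eq_zero_of_continuous {γ : ℝ → Pt m s} (hγ : Continuous γ) {a b : ℝ}
    (ha : γ a ∉ polyP v u σ) (hb : γ b ∈ polyP v u σ) :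
    ∃ t ∈ Set.uIcc a b, γ t ∈ polyP v u σ ∧ ∃ l, slack v u σ l (γ t) = 0 := by
  obtain ⟨l₀, hl₀⟩ : ∃ l, slack v u σ l (γ a) < 0 := by simpa [mem_polyP_iff] using ha
  have hne : (univ : Finset (Fin L)).Nonempty := ⟨l₀, mem_univ l₀⟩
  set g : ℝ → ℝ := fun t => univ.inf' hne fun l => slack v u σ l (γ t)
  have hg : Continuous g :=
    Continuous.finset_inf'_apply hne fun l _ => (continuous_slack l).comp hγ
  obtain ⟨t, ht, hgt⟩ : (0 : ℝ) ∈ g '' Set.uIcc a b :=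
    intermediate_value_uIcc hg.continuousOn <| Set.mem_uIcc.2 <| Or.inl
      ⟨(inf'_le _ (mem_univ l₀)).trans hl₀.le, le_inf' hne _ fun l _ => hb l⟩
  obtain ⟨l, -, hl⟩ := exists_mem_eq_inf' hne fun l => slack v u σ l (γ t)
  exact ⟨t, ht, fun l' => hgt ▸ inf'_le _ (mem_univ l'), l, hl ▸ hgt⟩

theorem exists_slack_add_smul_eq_zero [Nonempty (Fin L)] {p : Pt m s} (hp : p ∈ polyP v u σ)
    {d : Fin s → ℝ} (hd : ∀ l, 0 < dot (u l) d) :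
    ∃ c : ℝ, 0 ≤ c ∧ (p.1, p.2 + c • d) ∈ polyP v u σ ∧
      ∃ l, slack v u σ l (p.1, p.2 + c • d) = 0 := by
  obtain ⟨l₀, -, hl₀⟩ :=
    exists_min_image univ (fun l => slack v u σ l p / dot (u l) d) univ_nonempty
  refine ⟨slack v u σ l₀ p / dot (u l₀) d, div_nonneg (hp l₀) (hd l₀).le,
    mem_polyP_iff.2 fun l => ?_, l₀, ?_⟩
  · rw [slack_add_smul_snd]
    have := (le_div_iff₀ (hd l)).1 (hl₀ l (mem_univ l))
    linarith
  · rw [slack_add_smul_snd, div_mul_cancel₀ _ (hd l₀).ne', sub_self]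

theorem exists_russellFeasible_gt_of_not_mem_polyP
    (hpos : ∀ l, (∀ i, 0 < v l i) ∧ (∀ r, 0 < u l r))
    (hPfront : strongF (polyP v u σ) = weakF (polyP v u σ))
    {x x' : Fin m → ℝ} {y y' : Fin s → ℝ} (hxy' : (x', y') ∈ TSet v u σ)
    (hdom : (∀ i, x' i ≤ x i) ∧ (∀ r, y r ≤ y' r)) (hne : (x', y') ≠ (x, y))
    {θ : Fin m → ℝ} {φ : Fin s → ℝ} (hθφ : RussellFeasible (TSet v u σ) x y θ φ)
    (hout : (θ * x', φ * y') ∉ polyP v u σ) :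
    ∃ θ' φ', RussellFeasible (TSet v u σ) x' y' θ' φ' ∧ russellSum θ φ < russellSum θ' φ' := by
  obtain ⟨hθ, hφ, hp⟩ := hθφ
  have hθφ₁ : θ ≠ 1 ∨ φ ≠ 1 := by
    by_contra! h
    obtain ⟨rfl, rfl⟩ := h
    rw [one_mul, one_mul] at hp
    exact hp.2 (x', y') hdom.1 hdom.2 hne hxy'
  set θα : ℝ → Fin m → ℝ := fun α => θ + α • (1 - θ)
  set φα : ℝ → Fin s → ℝ := fun α => φ + α • (1 - φ)
  obtain ⟨α, hα, hαP, l, hl⟩ := exists_slack_eq_zero_of_continuous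
    (γ := fun α => (θα α * x', φα α * y')) (by fun_prop) (a := 0) (b := 1)
    (by simpa [θα, φα] using hout) (by simpa [θα, φα] using hxy'.1)
  rw [Set.uIcc_of_le zero_le_one] at hα
  have hα₀ : α ≠ 0 := by
    rintro rfl
    exact hout (by simpa [θα, φα] using hαP)
  have hθ' : ∀ i, θ i ≤ θα α i ∧ θα α i ≤ 1 := fun i => by
    simp only [θα, Pi.add_apply, Pi.smul_apply, Pi.sub_apply, Pi.one_apply, smul_eq_mul]
    constructor <;> nlinarith [hθ i, hα.1, hα.2]
  have hφ' : ∀ r, 1 ≤ φα α r ∧ φα α r ≤ φ r := fun r => by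
    simp only [φα, Pi.add_apply, Pi.smul_apply, Pi.sub_apply, Pi.one_apply, smul_eq_mul]
    constructor <;> nlinarith [hφ r, hα.1, hα.2]
  have hφ'pos : ∀ r, 0 < φα α r := fun r => zero_lt_one.trans_le (hφ' r).1
  refine ⟨θα α, φα α, ⟨fun i => ⟨(hθ i).1.trans (hθ' i).1, (hθ' i).2⟩, fun r => (hφ' r).1,
    mem_strongF_TSet_of_slack_eq_zero hpos hPfront
      (mul_mem_TSet hxy' (fun i => (hθ i).1.trans (hθ' i).1) hφ'pos hαP) hl⟩, ?_⟩
  refine russellSum_lt_russellSum (fun i => (hθ' i).1) hφ'pos (fun r => (hφ' r).2) ?_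
  refine hθφ₁.imp (fun h he => h ?_) (fun h he => h ?_)
  · exact (sub_eq_zero.1 ((smul_eq_zero.1 (left_eq_add.1 he)).resolve_left hα₀)).symm
  · exact (sub_eq_zero.1 ((smul_eq_zero.1 (add_eq_left.1 he)).resolve_left hα₀)).symm

theorem exists_russellFeasible_gt_of_mem_polyP
    (hpos : ∀ l, (∀ i, 0 < v l i) ∧ (∀ r, 0 < u l r))
    (hPfront : strongF (polyP v u σ) = weakF (polyP v u σ))
    {x x' : Fin m → ℝ} {y y' : Fin s → ℝ} (hxy' : (x', y') ∈ TSet v u σ)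
    (hdom : (∀ i, x' i ≤ x i) ∧ (∀ r, y r ≤ y' r)) (hne : (x', y') ≠ (x, y))
    {θ : Fin m → ℝ} {φ : Fin s → ℝ} (hθφ : RussellFeasible (TSet v u σ) x y θ φ)
    (hin : (θ * x', φ * y') ∈ polyP v u σ) :
    ∃ θ' φ', RussellFeasible (TSet v u σ) x' y' θ' φ' ∧ russellSum θ φ < russellSum θ' φ' := by
  obtain ⟨hθ, hφ, hp⟩ := hθφ
  have hφpos : ∀ r, 0 < φ r := fun r => zero_lt_one.trans_le (hφ r)
  have heq : (θ * x', φ * y') = (θ * x, φ * y) := by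
    by_contra h
    exact hp.2 _ (fun i => mul_le_mul_of_nonneg_left (hdom.1 i) (hθ i).1)
      (fun r => mul_le_mul_of_nonneg_left (hdom.2 r) (hφpos r).le) h
      (mul_mem_TSet hxy' (fun i => (hθ i).1) hφpos hin)
  have hy : y' = y := funext fun r =>
    mul_left_cancel₀ (hφpos r).ne' (congrFun (congrArg Prod.snd heq) r)
  obtain ⟨i₀, hi₀⟩ := Function.ne_iff.mp fun hx : x' = x => hne (by rw [hx, hy])
  have hθi₀ : θ i₀ = 0 := by
    by_contra h
    exact hi₀ (mul_left_cancel₀ h (congrFun (congrArg Prod.fst heq) i₀))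
  have := nonempty_of_mem_strongF_TSet hp
  obtain ⟨r₀, hr₀⟩ := Function.ne_iff.mp hxy'.2.2.2
  have hy'r₀ : 0 < y' r₀ := (hxy'.2.2.1 r₀).lt_of_ne (Ne.symm hr₀)
  obtain ⟨c, hc, hcP, l, hl⟩ := exists_slack_add_smul_eq_zero hxy'.1
    (d := Pi.single r₀ (y' r₀)) fun l => by
      rw [dot_eq_dotProduct, dotProduct_single]
      exact mul_pos ((hpos l).2 r₀) hy'r₀
  set φ' : Fin s → ℝ := 1 + c • Pi.single r₀ 1
  have hφ' : ∀ r, 1 ≤ φ' r := fun r => by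
    by_cases h : r = r₀
    · subst h; simpa [φ'] using hc
    · simp [φ', h]
  have hpt : ((1 : Fin m → ℝ) * x', φ' * y') = (x', y' + c • Pi.single r₀ (y' r₀)) := by
    refine Prod.ext (one_mul x') (funext fun r => ?_)
    by_cases h : r = r₀
    · subst h
      simp only [φ', Pi.mul_apply, Pi.add_apply, Pi.one_apply, Pi.smul_apply, Pi.single_eq_same,
        smul_eq_mul, mul_one]
      ring
    · simp [φ', h]
  rw [← hpt] at hcP hl
  refine ⟨1, φ', ⟨fun _ => ⟨zero_le_one, le_rfl⟩, hφ', ?_⟩,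
    russellSum_lt_russellSum_one_add_single (fun i => (hθ i).2) hθi₀ hφ hc r₀⟩
  exact mem_strongF_TSet_of_slack_eq_zero hpos hPfront
    (mul_mem_TSet hxy' (fun _ => zero_le_one) (fun r => zero_lt_one.trans_le (hφ' r)) hcP) hl

end Frontier

theorem stmt10_general {m s L : ℕ} (hms : 0 < m + s)
    (v : Fin L → Fin m → ℝ) (u : Fin L → Fin s → ℝ) (σ : Fin L → ℝ)
    (hpos : ∀ l, (∀ i, 0 < v l i) ∧ (∀ r, 0 < u l r))
    (hPfront : strongF (polyP v u σ) = weakF (polyP v u σ))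
    (x x' : Fin m → ℝ) (y y' : Fin s → ℝ)
    (hxy' : (x', y') ∈ TSet v u σ)
    (hdom : (∀ i, x' i ≤ x i) ∧ (∀ r, y r ≤ y' r))
    (hne : (x', y') ≠ (x, y))
    (F F' : ℝ)
    (hF : IsGreatest {t : ℝ | ∃ (θ : Fin m → ℝ) (φ : Fin s → ℝ),
        (∀ i, 0 ≤ θ i ∧ θ i ≤ 1) ∧ (∀ r, 1 ≤ φ r) ∧
        ((fun i => θ i * x i), (fun r => φ r * y r)) ∈ strongF (TSet v u σ) ∧
        t = (1 / (m + s : ℝ)) * ((∑ i, θ i) + ∑ r, 1 / φ r)} F)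
    (hF' : IsGreatest {t : ℝ | ∃ (θ : Fin m → ℝ) (φ : Fin s → ℝ),
        (∀ i, 0 ≤ θ i ∧ θ i ≤ 1) ∧ (∀ r, 1 ≤ φ r) ∧
        ((fun i => θ i * x' i), (fun r => φ r * y' r)) ∈ strongF (TSet v u σ) ∧
        t = (1 / (m + s : ℝ)) * ((∑ i, θ i) + ∑ r, 1 / φ r)} F') :
    F < F' := by
  obtain ⟨⟨θ, φ, hθ, hφ, hp, rfl⟩, -⟩ := hF
  have hθφ : RussellFeasible (TSet v u σ) x y θ φ := ⟨hθ, hφ, hp⟩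
  obtain ⟨θ', φ', ⟨hθ', hφ', hp'⟩, hlt⟩ :
      ∃ θ' φ', RussellFeasible (TSet v u σ) x' y' θ' φ' ∧ russellSum θ φ < russellSum θ' φ' := by
    by_cases hin : (θ * x', φ * y') ∈ polyP v u σ
    · exact exists_russellFeasible_gt_of_mem_polyP hpos hPfront hxy' hdom hne hθφ hin
    · exact exists_russellFeasible_gt_of_not_mem_polyP hpos hPfront hxy' hdom hne hθφ hin
  have hms' : (0 : ℝ) < m + s := by exact_mod_cast hms
  calc (1 / (m + s : ℝ)) * russellSum θ φ
      < (1 / (m + s : ℝ)) * russellSum θ' φ' := mul_lt_mul_of_pos_left hlt (by positivity)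
    _ ≤ F' := hF'.2 ⟨θ', φ', hθ', hφ', hp', rfl⟩

/-- strong monotonicity of the extended max Russell graph measure. -/
theorem stmt10 {m s L : ℕ} (hms : 0 < m + s)
    (v : Fin L → Fin m → ℝ) (u : Fin L → Fin s → ℝ) (σ : Fin L → ℝ)
    (hpos : ∀ l, (∀ i, 0 < v l i) ∧ (∀ r, 0 < u l r))
    (hσ : ∀ l, ∃ p ∈ polyP v u σ, dot (v l) p.1 - dot (u l) p.2 = σ l)
    (hPfront : strongF (polyP v u σ) = weakF (polyP v u σ))
    (x x' : Fin m → ℝ) (y y' : Fin s → ℝ)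
    (hxy : (x, y) ∈ TSet v u σ) (hxy' : (x', y') ∈ TSet v u σ)
    (hdom : (∀ i, x' i ≤ x i) ∧ (∀ r, y r ≤ y' r))
    (hne : (x', y') ≠ (x, y))
    (F F' : ℝ)
    (hF : IsGreatest {t : ℝ | ∃ (θ : Fin m → ℝ) (φ : Fin s → ℝ),
        (∀ i, 0 ≤ θ i ∧ θ i ≤ 1) ∧ (∀ r, 1 ≤ φ r) ∧
        ((fun i => θ i * x i), (fun r => φ r * y r)) ∈ strongF (TSet v u σ) ∧
        t = (1 / (m + s : ℝ)) * ((∑ i, θ i) + ∑ r, 1 / φ r)} F)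
    (hF' : IsGreatest {t : ℝ | ∃ (θ : Fin m → ℝ) (φ : Fin s → ℝ),
        (∀ i, 0 ≤ θ i ∧ θ i ≤ 1) ∧ (∀ r, 1 ≤ φ r) ∧
        ((fun i => θ i * x' i), (fun r => φ r * y' r)) ∈ strongF (TSet v u σ) ∧
        t = (1 / (m + s : ℝ)) * ((∑ i, θ i) + ∑ r, 1 / φ r)} F') :
    F < F' :=
  stmt10_general hms v u σ hpos hPfront x x' y y' hxy' hdom hne F F' hF hF'
end
end

section
/- Suppose the optimal value of min{u_r : v·1_m + u·1_s = 1, vR⁻ − uR⁺ ≥ 0, v ≥ 0, u ≥ 0} is positive for every r = 1,…,s. Then the LP max{Σ_{r=1}^s d⁺_r : (0, d⁺) ∈ P, d⁺ ∈ ℝ^s_+} has positive optimal value if and only if there exists y ∈ ℝ^s_+ \ {0} with (0, y) ∈ T, where T = P ∩ (ℝ^m_+ × (ℝ^s_+ \ {0})). -/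
/-!
(⇒) is immediate. For (⇐), a feasible multiplier `(w, z)` of the normalization LP with `z > 0`
gives, by weak duality, `z ⬝ᵥ d ≤ -σ` for every `d ≥ 0` with `(0, d) ∈ P`, where `σ` is a lower
bound of the finitely many numbers `w ⬝ᵥ xⱼ - z ⬝ᵥ yⱼ`; so these `d` form a bounded set. The set is
also closed: `P` is the preimage under `(x, y) ↦ (1, x, y)` of a finitely generated cone, and
finitely generated cones are closed (conic Carathéodory: moving a nonnegative representation along
a kernel direction until a coefficient vanishes reduces to fewer generators). Hence `∑ d` attains
its maximum on that compact set, and the maximum is at least `∑ y > 0`.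
-/

noncomputable section

open Finset

/-- The trade-offs production set
`P = {(x,y) : Σλⱼxⱼ + R⁻π ≤ x, Σλⱼyⱼ + R⁺π ≥ y, Σλⱼ = 1, λ ≥ 0, π ≥ 0}`. -/
def Pcons {m s n K : ℕ} (X : Fin n → Fin m → ℝ) (Y : Fin n → Fin s → ℝ)
    (Rm : Fin m → Fin K → ℝ) (Rp : Fin s → Fin K → ℝ) : Set (Pt m s) :=
  {p | ∃ (lam : Fin n → ℝ) (π : Fin K → ℝ),
    (∀ j, 0 ≤ lam j) ∧ (∀ t, 0 ≤ π t) ∧ (∑ j, lam j) = 1 ∧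
    (∀ i, (∑ j, lam j * X j i) + (∑ t, Rm i t * π t) ≤ p.1 i) ∧
    (∀ r, p.2 r ≤ (∑ j, lam j * Y j r) + ∑ t, Rp r t * π t)}

/-- Feasible multipliers of the normalization LP (29). -/
def ratioFeas {m s K : ℕ} (Rm : Fin m → Fin K → ℝ) (Rp : Fin s → Fin K → ℝ)
    (w : Fin m → ℝ) (z : Fin s → ℝ) : Prop :=
  (∑ i, w i) + (∑ r, z r) = 1 ∧
  (∀ t, 0 ≤ (∑ i, w i * Rm i t) - ∑ r, z r * Rp r t) ∧
  (∀ i, 0 ≤ w i) ∧ (∀ r, 0 ≤ z r)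

section FinitelyGeneratedCone

variable {ι E : Type*} [AddCommGroup E] [Module ℝ E]

theorem exists_nonneg_sub_smul_apply_eq_zero [Fintype ι] {c g : ι → ℝ} (hc : 0 ≤ c)
    (hg : g ≠ 0) : ∃ t : ℝ, ∃ i, 0 ≤ c - t • g ∧ (c - t • g) i = 0 := by
  classical
  wlog hpos : ∃ i, 0 < g i generalizing g
  · have hneg : ∃ i, 0 < (-g) i := by
      simp only [not_exists, not_lt] at hpos
      obtain ⟨i, hi⟩ := Function.ne_iff.1 hg
      exact ⟨i, neg_pos.2 ((hpos i).lt_of_ne hi)⟩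
    obtain ⟨t, i, h⟩ := this (neg_ne_zero.2 hg) hneg
    exact ⟨-t, i, by simpa using h⟩
  obtain ⟨i, hi, hmin⟩ := (univ.filter fun i => 0 < g i).exists_min_image (fun i => c i / g i)
    (by simpa [Finset.Nonempty] using hpos)
  have hgi : 0 < g i := (mem_filter.1 hi).2
  refine ⟨c i / g i, i, fun j => ?_, by simp [hgi.ne']⟩
  simp only [Pi.zero_apply, Pi.sub_apply, Pi.smul_apply, smul_eq_mul, sub_nonneg]
  rcases le_or_gt (g j) 0 with hj | hj
  · exact (mul_nonpos_of_nonneg_of_nonpos (div_nonneg (hc i) hgi.le) hj).trans (hc j)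
  · calc c i / g i * g j ≤ c j / g j * g j :=
          mul_le_mul_of_nonneg_right (hmin j (by simp [hj])) hj.le
      _ = c j := div_mul_cancel₀ _ hj.ne'

theorem extend_val_comp_val_of_apply_eq_zero {c : ι → ℝ} {i : ι} (hc : c i = 0) :
    Function.extend (Subtype.val : {j // j ≠ i} → ι) (c ∘ Subtype.val) 0 = c := by
  funext j
  by_cases hj : j = i
  · subst hj
    rw [Function.extend_apply' _ _ _ (by simp), hc, Pi.zero_apply]
  · exact Subtype.val_injective.extend_apply _ _ ⟨j, hj⟩

theorem LinearMap.image_Ici_zero_eq_iUnion [Fintype ι] (f : (ι → ℝ) →ₗ[ℝ] E)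
    (hf : LinearMap.ker f ≠ ⊥) :
    f '' Set.Ici 0 = ⋃ i,
      (f ∘ₗ Function.ExtendByZero.linearMap ℝ (Subtype.val : {j // j ≠ i} → ι)) '' Set.Ici 0 := by
  obtain ⟨g, hg, hg0⟩ := Submodule.exists_mem_ne_zero_of_ne_bot hf
  rw [LinearMap.mem_ker] at hg
  ext x
  simp only [Set.mem_image, Set.mem_iUnion, LinearMap.comp_apply]
  constructor
  · rintro ⟨c, hc, rfl⟩
    obtain ⟨t, i, hc', hci⟩ := exists_nonneg_sub_smul_apply_eq_zero hc hg0
    refine ⟨i, (c - t • g) ∘ Subtype.val, fun j => hc' j, ?_⟩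
    change f (Function.extend _ _ 0) = f c
    rw [extend_val_comp_val_of_apply_eq_zero hci, map_sub, map_smul, hg, smul_zero, sub_zero]
  · rintro ⟨i, c, hc, rfl⟩
    refine ⟨_, fun j => ?_, rfl⟩
    rcases em (∃ a : {j // j ≠ i}, a.1 = j) with ⟨a, rfl⟩ | hj
    · rw [Function.ExtendByZero.linearMap_apply, Subtype.val_injective.extend_apply]
      exact hc a
    · rw [Function.ExtendByZero.linearMap_apply, Function.extend_apply' _ _ _ hj]

theorem LinearMap.isClosed_image_Ici_zero [TopologicalSpace E] [IsTopologicalAddGroup E]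
    [ContinuousSMul ℝ E] [T2Space E] [Fintype ι] (f : (ι → ℝ) →ₗ[ℝ] E) :
    IsClosed (f '' Set.Ici 0) := by
  classical
  induction h : Fintype.card ι using Nat.strong_induction_on generalizing ι with
  | _ n ih =>
    by_cases hf : LinearMap.ker f = ⊥
    · exact (LinearMap.isClosedEmbedding_of_injective hf).isClosedMap _ isClosed_Ici
    rw [f.image_Ici_zero_eq_iUnion hf]
    refine isClosed_iUnion_of_finite fun i => ih _ ?_ _ rfl
    have := Fintype.card_pos_iff.2 ⟨i⟩
    simp only [ne_eq, Fintype.card_subtype_compl, Fintype.card_unique]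
    omega

end FinitelyGeneratedCone

open Matrix

section ProductionSet

variable {m s n K : ℕ} (X : Matrix (Fin n) (Fin m) ℝ) (Y : Matrix (Fin n) (Fin s) ℝ)
    (Rm : Matrix (Fin m) (Fin K) ℝ) (Rp : Matrix (Fin s) (Fin K) ℝ)

/-- `(λ, π, a, b) ↦ (∑ λ, λX + R⁻π + a, λY + R⁺π - b)`, with `a` and `b` the slacks of the two
inequalities defining `P`. -/
def pconsMap : ((Fin n ⊕ Fin K) ⊕ (Fin m ⊕ Fin s) → ℝ) →ₗ[ℝ] ℝ × (Fin m → ℝ) × (Fin s → ℝ) :=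
  let lam := LinearMap.funLeft ℝ ℝ (Sum.inl ∘ Sum.inl)
  let π := LinearMap.funLeft ℝ ℝ (Sum.inl ∘ Sum.inr)
  (Fintype.linearCombination ℝ (fun _ => (1 : ℝ)) ∘ₗ lam).prod
    ((vecMulLinear X ∘ₗ lam + mulVecLin Rm ∘ₗ π + LinearMap.funLeft ℝ ℝ (Sum.inr ∘ Sum.inl)).prod
      (vecMulLinear Y ∘ₗ lam + mulVecLin Rp ∘ₗ π - LinearMap.funLeft ℝ ℝ (Sum.inr ∘ Sum.inr)))

theorem pconsMap_apply (c : (Fin n ⊕ Fin K) ⊕ (Fin m ⊕ Fin s) → ℝ) :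
    pconsMap X Y Rm Rp c =
      (∑ j, c (.inl (.inl j)),
        c ∘ (.inl ∘ .inl) ᵥ* X + Rm *ᵥ c ∘ (.inl ∘ .inr) + c ∘ (.inr ∘ .inl),
        c ∘ (.inl ∘ .inl) ᵥ* Y + Rp *ᵥ c ∘ (.inl ∘ .inr) - c ∘ (.inr ∘ .inr)) := by
  refine Prod.ext ?_ (Prod.ext rfl rfl)
  simp [pconsMap, Fintype.linearCombination_apply]

theorem mem_Pcons_iff_mem_image_pconsMap {x : Fin m → ℝ} {y : Fin s → ℝ} :
    (x, y) ∈ Pcons X Y Rm Rp ↔ (1, x, y) ∈ pconsMap X Y Rm Rp '' Set.Ici 0 := by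
  simp only [Set.mem_image, pconsMap_apply, Prod.mk.injEq]
  constructor
  · rintro ⟨lam, π, hlam, hπ, hsum, hx, hy⟩
    refine ⟨Sum.elim (Sum.elim lam π) (Sum.elim (x - (lam ᵥ* X + Rm *ᵥ π))
      (lam ᵥ* Y + Rp *ᵥ π - y)), ?_, hsum, ?_, ?_⟩
    · rintro ((j | t) | (i | r))
      exacts [hlam j, hπ t, sub_nonneg.2 (hx i), sub_nonneg.2 (hy r)]
    · change lam ᵥ* X + Rm *ᵥ π + (x - (lam ᵥ* X + Rm *ᵥ π)) = x
      abel
    · change lam ᵥ* Y + Rp *ᵥ π - (lam ᵥ* Y + Rp *ᵥ π - y) = y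
      abel
  · rintro ⟨c, hc, hsum, rfl, rfl⟩
    refine ⟨c ∘ (.inl ∘ .inl), c ∘ (.inl ∘ .inr), fun j => hc _, fun t => hc _, hsum,
      fun i => ?_, fun r => ?_⟩
    · exact le_add_of_nonneg_right (hc (.inr (.inl i)))
    · exact sub_le_self _ (hc (.inr (.inr r)))

theorem isClosed_Pcons : IsClosed (Pcons X Y Rm Rp) := by
  have : Pcons X Y Rm Rp =
      (fun p : Pt m s => ((1 : ℝ), p.1, p.2)) ⁻¹' (pconsMap X Y Rm Rp '' Set.Ici 0) := by
    ext ⟨x, y⟩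
    exact mem_Pcons_iff_mem_image_pconsMap X Y Rm Rp
  rw [this]
  exact (pconsMap X Y Rm Rp).isClosed_image_Ici_zero.preimage (by fun_prop)

theorem le_dotProduct_sub_dotProduct_of_mem_Pcons {v : Fin m → ℝ} {u : Fin s → ℝ} {σ : ℝ}
    (hv : 0 ≤ v) (hu : 0 ≤ u) (hR : u ᵥ* Rp ≤ v ᵥ* Rm) (hσ : ∀ j, σ ≤ v ⬝ᵥ X j - u ⬝ᵥ Y j)
    {x : Fin m → ℝ} {y : Fin s → ℝ} (hxy : (x, y) ∈ Pcons X Y Rm Rp) :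
    σ ≤ v ⬝ᵥ x - u ⬝ᵥ y := by
  obtain ⟨lam, π, hlam, hπ, hsum, hx, hy⟩ := hxy
  have hx' : v ⬝ᵥ (lam ᵥ* X + Rm *ᵥ π) ≤ v ⬝ᵥ x :=
    dotProduct_le_dotProduct_of_nonneg_left hx hv
  have hy' : u ⬝ᵥ y ≤ u ⬝ᵥ (lam ᵥ* Y + Rp *ᵥ π) :=
    dotProduct_le_dotProduct_of_nonneg_left hy hu
  have hπ' : u ᵥ* Rp ⬝ᵥ π ≤ v ᵥ* Rm ⬝ᵥ π := dotProduct_le_dotProduct_of_nonneg_right hR hπ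
  have hlam' : σ ≤ v ⬝ᵥ (lam ᵥ* X) - u ⬝ᵥ (lam ᵥ* Y) :=
    calc σ = ∑ j, lam j * σ := by rw [← Finset.sum_mul, hsum, one_mul]
      _ ≤ ∑ j, lam j * (v ⬝ᵥ X j - u ⬝ᵥ Y j) :=
        Finset.sum_le_sum fun j _ => mul_le_mul_of_nonneg_left (hσ j) (hlam j)
      _ = lam ⬝ᵥ (X *ᵥ v - Y *ᵥ u) := by
        simp only [dotProduct_comm v, dotProduct_comm u]
        rfl
      _ = v ⬝ᵥ (lam ᵥ* X) - u ⬝ᵥ (lam ᵥ* Y) := by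
        rw [dotProduct_sub, dotProduct_mulVec, dotProduct_mulVec, dotProduct_comm _ v,
          dotProduct_comm _ u]
  rw [dotProduct_add, dotProduct_mulVec] at hx'
  rw [dotProduct_add, dotProduct_mulVec] at hy'
  linarith

theorem isCompact_setOf_zero_input_mem_Pcons {w : Fin m → ℝ} {z : Fin s → ℝ} (hw : 0 ≤ w)
    (hz : ∀ r, 0 < z r) (hR : z ᵥ* Rp ≤ w ᵥ* Rm) :
    IsCompact {d : Fin s → ℝ | (∀ r, 0 ≤ d r) ∧ ((0 : Fin m → ℝ), d) ∈ Pcons X Y Rm Rp} := by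
  obtain ⟨σ, hσ⟩ := (Set.finite_range fun j => w ⬝ᵥ X j - z ⬝ᵥ Y j).bddBelow
  refine (isCompact_Icc (b := fun r => -σ / z r)).of_isClosed_subset
    (isClosed_Ici.inter ((isClosed_Pcons X Y Rm Rp).preimage (by fun_prop)))
    (fun d ⟨hd, hdP⟩ => ⟨hd, fun r => ?_⟩)
  have hzd : σ ≤ w ⬝ᵥ 0 - z ⬝ᵥ d :=
    le_dotProduct_sub_dotProduct_of_mem_Pcons X Y Rm Rp hw (fun r => (hz r).le) hR
      (fun j => hσ ⟨j, rfl⟩) hdP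
  have hr : z r * d r ≤ z ⬝ᵥ d := Finset.single_le_sum
    (f := fun r => z r * d r) (fun r _ => mul_nonneg (hz r).le (hd r)) (Finset.mem_univ r)
  rw [dotProduct_zero, zero_sub] at hzd
  rw [le_div_iff₀ (hz r)]
  linarith

end ProductionSet

theorem exists_ratioFeas_forall_pos {m s K : ℕ} {Rm : Fin m → Fin K → ℝ}
    {Rp : Fin s → Fin K → ℝ} (r₀ : Fin s)
    (hu : ∀ r, 0 < sInf {c : ℝ | ∃ w z, ratioFeas Rm Rp w z ∧ c = z r}) :
    ∃ w z, ratioFeas Rm Rp w z ∧ ∀ r, 0 < z r := by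
  obtain ⟨_, w, z, hwz, rfl⟩ : {c : ℝ | ∃ w z, ratioFeas Rm Rp w z ∧ c = z r₀}.Nonempty := by
    by_contra h
    simpa [Set.not_nonempty_iff_eq_empty.1 h] using hu r₀
  refine ⟨w, z, hwz, fun r => (hu r).trans_le (csInf_le ⟨0, ?_⟩ ⟨w, z, hwz, rfl⟩)⟩
  rintro _ ⟨w', z', h, rfl⟩
  exact h.2.2.2 r

theorem stmt15_general {m s n K : ℕ}
    (X : Fin n → Fin m → ℝ) (Y : Fin n → Fin s → ℝ)
    (Rm : Fin m → Fin K → ℝ) (Rp : Fin s → Fin K → ℝ)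
    (hu : ∀ r, 0 < sInf {c : ℝ | ∃ w z, ratioFeas Rm Rp w z ∧ c = z r}) :
    (∃ g, IsGreatest {t : ℝ | ∃ d : Fin s → ℝ, (∀ r, 0 ≤ d r) ∧
        ((0 : Fin m → ℝ), d) ∈ Pcons X Y Rm Rp ∧ t = ∑ r, d r} g ∧ 0 < g) ↔
      ∃ yv : Fin s → ℝ, (∀ r, 0 ≤ yv r) ∧ yv ≠ 0 ∧
        ((0 : Fin m → ℝ), yv) ∈ Pcons X Y Rm Rp := by
  constructor
  · rintro ⟨g, ⟨⟨d, hd, hdP, rfl⟩, -⟩, hg⟩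
    refine ⟨d, hd, ?_, hdP⟩
    rintro rfl
    simp at hg
  · rintro ⟨y, hy, hy0, hyP⟩
    obtain ⟨r₀, -⟩ := Function.ne_iff.1 hy0
    obtain ⟨w, z, ⟨-, hR, hw, -⟩, hz⟩ := exists_ratioFeas_forall_pos r₀ hu
    obtain ⟨d, ⟨hd, hdP⟩, hmax⟩ := (isCompact_setOf_zero_input_mem_Pcons X Y Rm Rp hw hz
      fun t => sub_nonneg.1 (hR t)).exists_isMaxOn ⟨y, hy, hyP⟩
      (f := fun d => ∑ r, d r) (by fun_prop)
    refine ⟨∑ r, d r, ⟨⟨d, hd, hdP, rfl⟩, ?_⟩, ?_⟩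
    · rintro _ ⟨d', hd', hd'P, rfl⟩
      exact hmax ⟨hd', hd'P⟩
    · exact (Fintype.sum_pos (lt_of_le_of_ne hy (Ne.symm hy0))).trans_le (hmax ⟨hy, hyP⟩)

/-- free-lunch characterization. -/
theorem stmt15 {m s n K : ℕ} (hn : 0 < n)
    (X : Fin n → Fin m → ℝ) (Y : Fin n → Fin s → ℝ)
    (Rm : Fin m → Fin K → ℝ) (Rp : Fin s → Fin K → ℝ)
    (hdata : ∀ j, (∀ i, 0 ≤ X j i) ∧ (∀ r, 0 ≤ Y j r))
    (hu : ∀ r, 0 < sInf {c : ℝ | ∃ w z, ratioFeas Rm Rp w z ∧ c = z r}) :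
    (∃ g, IsGreatest {t : ℝ | ∃ d : Fin s → ℝ, (∀ r, 0 ≤ d r) ∧
        ((0 : Fin m → ℝ), d) ∈ Pcons X Y Rm Rp ∧ t = ∑ r, d r} g ∧ 0 < g) ↔
      ∃ yv : Fin s → ℝ, (∀ r, 0 ≤ yv r) ∧ yv ≠ 0 ∧
        ((0 : Fin m → ℝ), yv) ∈ Pcons X Y Rm Rp :=
  stmt15_general X Y Rm Rp hu
end
end
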